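/- arXiv:1706.00270 — 2 statements merged into one kernel-verified Lean document; each statement's English description precedes it below -/
import Mathlib

section
/- Let P be a parametric interval Markov chain and α a label. If the constraint system consisting of the existential-consistency constraints together with the reachability-witness constraints (variables ω_s as in the qualitative reachability encoding) and the additional constraint ⋀_{s ∈ S_α} ¬ρ_s is unsatisfiable, then in every Markov chain M satisfying P (under either semantics), some state labeled α is reachable from the initial state with positive probability; i.e., α is universally reachable in P. -/
open Classical

structure MC (S : Type) (A : Type) where
  s0 : S
  p : S → S → ℝ
  nonneg : ∀ s s', 0 ≤ p s s'
  sum_one : ∀ s, ∑ᶠ s', p s s' = 1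
  V : S → Set A

namespace MC

variable {S A : Type}

/-- Probability of a finite path (product of transition probabilities). -/
def pathProb (p : S → S → ℝ) : S → List S → ℝ
  | _, [] => 1
  | s, s' :: l => p s s' * pathProb p s' l

/-- `UntilPath φ ψ s l` : starting from `s`, the (nonempty) suffix `l` first reaches a
`ψ`-state at its last position, with `φ` holding at all strictly earlier positions after
the start. -/
inductive UntilPath (φ ψ : S → Prop) : S → List S → Prop
  | single {s s' : S} (h : ψ s') : UntilPath φ ψ s [s']
  | cons {s s' : S} {l : List S} (hψ : ¬ ψ s') (hφ : φ s') (h : UntilPath φ ψ s' l) :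
      UntilPath φ ψ s (s' :: l)

/-- `P_s(φ U ψ)` : first-passage sum over until-paths. -/
noncomputable def untilProb (p : S → S → ℝ) (φ ψ : S → Prop) (s : S) : ℝ :=
  ∑' l : {l : List S // UntilPath φ ψ s l}, pathProb p s l.1

/-- `P_s(◊ψ)` : probability of eventually reaching a `ψ`-state from `s`. -/
noncomputable def reachProb (p : S → S → ℝ) (ψ : S → Prop) (s : S) : ℝ :=
  if ψ s then 1 else untilProb p (fun _ => True) ψ s

/-- `P^M(◊α)` : probability of eventually reaching a state labeled `α` from the initial
state of `M`. -/
noncomputable def Preach (M : MC S A) (α : Set A) : ℝ :=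
  reachProb M.p (fun s => M.V s = α) M.s0

/-- Reachability via positive-probability transitions. -/
def Reaches (p : S → S → ℝ) : S → S → Prop :=
  Relation.ReflTransGen fun a b => 0 < p a b

end MC

/-- Interval Markov chain: each transition carries an interval `[Plo, Phi] ⊆ [0,1]`. -/
structure IMC (S : Type) (A : Type) where
  s0 : S
  Plo : S → S → ℝ
  Phi : S → S → ℝ
  V : S → Set A

/-- Once-and-for-all satisfaction `M ⊨ᵒ I`. -/
def SatO {S A : Type} (M : MC S A) (I : IMC S A) : Prop :=
  M.s0 = I.s0 ∧ M.V = I.V ∧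
    ∀ s, MC.Reaches M.p M.s0 s → ∀ s', M.p s s' ∈ Set.Icc (I.Plo s s') (I.Phi s s')

/-- `R` is an at-every-step satisfaction relation between `M` and `I`. -/
def IsSatRel {T S A : Type} (M : MC T A) (I : IMC S A) (R : T → S → Prop) : Prop :=
  R M.s0 I.s0 ∧
    ∀ t s, R t s → M.V t = I.V s ∧
      ∃ δ : T → S → ℝ,
        (∀ t' s', 0 ≤ δ t' s') ∧
        (∀ t', 0 < M.p t t' → ∑ᶠ s', δ t' s' = 1) ∧
        (∀ s', (∑ᶠ t', M.p t t' * δ t' s') ∈ Set.Icc (I.Plo s s') (I.Phi s s')) ∧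
        (∀ t' s', 0 < δ t' s' → R t' s')

/-- At-every-step satisfaction `M ⊨ᵃ I`. -/
def SatA {T S A : Type} (M : MC T A) (I : IMC S A) : Prop :=
  ∃ R, IsSatRel M I R

/-- `M` satisfies `I` with degree `n`. -/
def SatADeg {T S A : Type} (n : ℕ) (M : MC T A) (I : IMC S A) : Prop :=
  ∃ R, IsSatRel M I R ∧ ∀ t, {s | R t s}.ncard ≤ n

/-- Combined transition function on the disjoint union of two Markov chains. -/
def sumP {S T A : Type} (M : MC S A) (N : MC T A) : S ⊕ T → S ⊕ T → ℝ
  | .inl a, .inl b => M.p a b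
  | .inr a, .inr b => N.p a b
  | _, _ => 0

/-- Combined labelling on the disjoint union. -/
def sumV {S T A : Type} (M : MC S A) (N : MC T A) : S ⊕ T → Set A :=
  Sum.elim M.V N.V

/-- Probabilistic bisimilarity of two Markov chains. -/
def Bisimilar {S T A : Type} (M : MC S A) (N : MC T A) : Prop :=
  ∃ B : (S ⊕ T) → (S ⊕ T) → Prop,
    Equivalence B ∧ B (Sum.inl M.s0) (Sum.inr N.s0) ∧
    ∀ a b, B a b → sumV M N a = sumV M N b ∧
      ∀ C : Set (S ⊕ T), (∀ x y, B x y → (x ∈ C ↔ y ∈ C)) →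
        (∑ᶠ c ∈ C, sumP M N a c) = ∑ᶠ c ∈ C, sumP M N b c

/-- Parametric interval Markov chain: interval endpoints are (rational) functions of the
parameter valuations `v : Y → ℝ`. -/
structure PIMC (S : Type) (A : Type) (Y : Type) where
  s0 : S
  Plo : S → S → (Y → ℝ) → ℝ
  Phi : S → S → (Y → ℝ) → ℝ
  V : S → Set A

/-- `x` lies in the interval obtained by evaluating the parametric interval `P(s,s')`
under valuation `v` (the evaluated interval is empty unless
`0 ≤ lo ≤ hi ≤ 1`). -/
def memPI {S A Y : Type} (P : PIMC S A Y) (v : Y → ℝ) (s s' : S) (x : ℝ) : Prop :=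
  0 ≤ P.Plo s s' v ∧ P.Plo s s' v ≤ x ∧ x ≤ P.Phi s s' v ∧ P.Phi s s' v ≤ 1

/-- `s'` is a potential successor of `s`: the parametric interval `P(s,s')` is not
identically `[0,0]`. -/
def PSucc {S A Y : Type} (P : PIMC S A Y) (s s' : S) : Prop :=
  ∃ v : Y → ℝ, P.Plo s s' v ≠ 0 ∨ P.Phi s s' v ≠ 0

/-- Once-and-for-all satisfaction of a pIMC: `M` satisfies some IMC instance of `P`. -/
def SatOP {S A Y : Type} (M : MC S A) (P : PIMC S A Y) : Prop :=
  M.s0 = P.s0 ∧ M.V = P.V ∧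
    ∃ v : Y → ℝ, (∀ y, 0 ≤ v y ∧ v y ≤ 1) ∧
      ∀ s, MC.Reaches M.p M.s0 s → ∀ s', memPI P v s s' (M.p s s')

/-- At-every-step satisfaction of a pIMC: `M ⊨ᵃ` some IMC instance of `P`. -/
def SatAP {T S A Y : Type} (M : MC T A) (P : PIMC S A Y) : Prop :=
  ∃ v : Y → ℝ, (∀ y, 0 ≤ v y ∧ v y ≤ 1) ∧
    ∃ R : T → S → Prop, R M.s0 P.s0 ∧
      ∀ t s, R t s → M.V t = P.V s ∧
        ∃ δ : T → S → ℝ,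
          (∀ t' s', 0 ≤ δ t' s') ∧
          (∀ t', 0 < M.p t t' → ∑ᶠ s', δ t' s' = 1) ∧
          (∀ s', memPI P v s s' (∑ᶠ t', M.p t t' * δ t' s')) ∧
          (∀ t' s', 0 < δ t' s' → R t' s')

def stmt17.stepN {S : Type} (s0 : S) (E : S → S → Prop) : ℕ → S → Prop
  | 0, s => s = s0
  | n+1, s => stmt17.stepN s0 E n s ∨ ∃ s', stmt17.stepN s0 E n s' ∧ E s' s

namespace stmt17
variable {S : Type} {s0 : S} {E : S → S → Prop}

def RD (s0 : S) (E : S → S → Prop) (s : S) : Prop := ∃ n, stepN s0 E n s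

lemma rd_s0 : RD s0 E s0 := ⟨0, rfl⟩

lemma rd_step {s s' : S} (h : RD s0 E s) (hE : E s s') : RD s0 E s' := by
  obtain ⟨n, hn⟩ := h
  exact ⟨n + 1, Or.inr ⟨s, hn, hE⟩⟩

lemma rd_ind {Q : S → Prop} (h0 : Q s0) (hstep : ∀ a b, Q a → E a b → Q b) :
    ∀ s, RD s0 E s → Q s := by
  have : ∀ n s, stepN s0 E n s → Q s := by
    intro n
    induction n with
    | zero => intro s hs; cases hs; exact h0
    | succ m ih =>
      intro s hs
      rcases hs with hs | ⟨s', hs', hE⟩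
      · exact ih s hs
      · exact hstep s' s (ih s' hs') hE
  exact fun s ⟨n, hn⟩ => this n s hn

lemma find_eq_zero_iff {s : S} (h : RD s0 E s) : Nat.find h = 0 ↔ s = s0 := by
  rw [Nat.find_eq_zero h]; rfl

lemma pred_lemma {s : S} (h : RD s0 E s) (hpos : 0 < Nat.find h) :
    ∃ s', ∃ h' : RD s0 E s', Nat.find h' + 1 = Nat.find h ∧ E s' s := by
  obtain ⟨m, hm⟩ := Nat.exists_eq_add_of_lt hpos
  rw [zero_add] at hm
  have hspec : stepN s0 E (m + 1) s := hm ▸ Nat.find_spec h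
  rcases hspec with hs | ⟨s', hs', hE⟩
  · exact absurd hs (Nat.find_min h (by omega))
  · have h' : RD s0 E s' := ⟨m, hs'⟩
    refine ⟨s', h', ?_, hE⟩
    have h1 : Nat.find h' ≤ m := Nat.find_le hs'
    have h2 : stepN s0 E (Nat.find h' + 1) s := Or.inr ⟨s', Nat.find_spec h', hE⟩
    have h3 : Nat.find h ≤ Nat.find h' + 1 := Nat.find_le h2
    omega

lemma realize : ∀ (d : ℕ) (s : S) (h : RD s0 E s), Nat.find h = d →
    ∀ k ≤ d, ∃ s', ∃ h' : RD s0 E s', Nat.find h' = k := by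
  intro d
  induction d with
  | zero => intro s h hd k hk; exact ⟨s, h, by omega⟩
  | succ m ih =>
    intro s h hd k hk
    rcases Nat.eq_or_lt_of_le hk with he | hlt
    · exact ⟨s, h, by omega⟩
    · obtain ⟨s', h', hfind, _⟩ := pred_lemma h (by omega)
      exact ih s' h' (by omega) k (by omega)

lemma card_bound [Finite S] {s : S} (h : RD s0 E s) : Nat.find h + 1 ≤ Nat.card S := by
  haveI := Fintype.ofFinite S
  classical
  set d := Nat.find h with hd
  let g : S → ℕ := fun x => if hx : RD s0 E x then Nat.find hx else 0
  have hsub : Finset.range (d + 1) ⊆ Finset.image g Finset.univ := by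
    intro k hk
    rw [Finset.mem_range] at hk
    obtain ⟨s', h', hfind⟩ := realize d s h rfl k (by omega)
    refine Finset.mem_image.2 ⟨s', Finset.mem_univ _, ?_⟩
    simp only [g, dif_pos h']
    exact hfind
  calc d + 1 = (Finset.range (d + 1)).card := (Finset.card_range _).symm
    _ ≤ (Finset.image g Finset.univ).card := Finset.card_le_card hsub
    _ ≤ Finset.univ.card := Finset.card_image_le
    _ = Nat.card S := by rw [Nat.card_eq_fintype_card, Finset.card_univ]

lemma finsum_pos_elim {ι : Type} {f : ι → ℝ} (hf : ∀ i, 0 ≤ f i)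
    (h : ∑ᶠ i, f i ≠ 0) : ∃ i, 0 < f i := by
  by_contra hc
  push_neg at hc
  exact h (finsum_eq_zero_of_forall_eq_zero fun i => le_antisymm (hc i) (hf i))

lemma not_psucc {A Y : Type} {P : PIMC S A Y} {s s' : S} (h : ¬ PSucc P s s')
    (v : Y → ℝ) {x : ℝ} (hx : memPI P v s s' x) : x = 0 := by
  rw [PSucc] at h
  push_neg at h
  obtain ⟨hlo, hhi⟩ := h v
  obtain ⟨_, h1, h2, _⟩ := hx
  rw [hlo] at h1; rw [hhi] at h2
  linarith

/-- The main construction: from an at-every-step satisfying MC with no reachable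
`α`-state, build a solution of the constraint system. -/
lemma mainA {S A Y : Type} [Finite S] (P : PIMC S A Y) (α : Set A)
    {T : Type} (M : MC T A) (hsat : SatAP M P)
    (hno : ¬ ∃ t, MC.Reaches M.p M.s0 t ∧ M.V t = α) :
    ∃ (v : Y → ℝ) (θ : S → S → ℝ) (ω : S → ℕ),
      (∀ y, 0 ≤ v y ∧ v y ≤ 1) ∧
      (∀ s s', 0 ≤ θ s s' ∧ θ s s' ≤ 1) ∧
      ω P.s0 = 1 ∧
      (∀ s, s ≠ P.s0 → ω s ≠ 1) ∧
      (∀ s, ω s ≤ Nat.card S) ∧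
      (∀ s, s ≠ P.s0 → 1 < ω s →
        ∃ s', s' ≠ s ∧ PSucc P s' s ∧ ω s = ω s' + 1 ∧ 0 < θ s' s) ∧
      (∀ s, s ≠ P.s0 →
        (ω s = 0 ↔ ∀ s', s' ≠ s → PSucc P s' s → (ω s' = 0 ∨ θ s' s = 0))) ∧
      (∀ s, s ≠ P.s0 →
        (ω s = 0 ↔ (∑ᶠ s', if PSucc P s' s ∧ s' ≠ s then θ s' s else 0) = 0)) ∧
      (∀ s, ω s ≠ 0 ↔ (∑ᶠ s', if PSucc P s s' then θ s s' else 0) = 1) ∧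
      (∀ s, ω s = 0 ↔ (∑ᶠ s', if PSucc P s s' then θ s s' else 0) = 0) ∧
      (∀ s, ω s ≠ 0 → ∀ s', PSucc P s s' → memPI P v s s' (θ s s')) ∧
      (∀ s, P.V s = α → ω s = 0) := by
  classical
  haveI := Fintype.ofFinite S
  obtain ⟨v, hv, R, hR0, hR⟩ := hsat
  -- good states: related to some M-reachable state
  set Good : S → Prop := fun s => ∃ t, MC.Reaches M.p M.s0 t ∧ R t s with hGooddef
  have hGood0 : Good P.s0 := ⟨M.s0, Relation.ReflTransGen.refl, hR0⟩
  haveI : Nonempty T := ⟨M.s0⟩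
  -- Skolemize the relation data
  have key : ∀ s : S, ∃ (δ : T → S → ℝ) (t : T), Good s →
      MC.Reaches M.p M.s0 t ∧ R t s ∧
      (∀ t' s', 0 ≤ δ t' s') ∧
      (∀ t', 0 < M.p t t' → ∑ᶠ s', δ t' s' = 1) ∧
      (∀ s', memPI P v s s' (∑ᶠ t', M.p t t' * δ t' s')) ∧
      (∀ t' s', 0 < δ t' s' → R t' s') := by
    intro s
    by_cases h : Good s
    · obtain ⟨t, ht, hts⟩ := h
      obtain ⟨_, δ, h1, h2, h3, h4⟩ := hR t s hts
      exact ⟨δ, t, fun _ => ⟨ht, hts, h1, h2, h3, h4⟩⟩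
    · exact ⟨fun _ _ => 0, Classical.arbitrary T, fun hg => absurd hg h⟩
  choose δf tf hkey using key
  -- the candidate transition row of a good state
  set row : S → S → ℝ :=
    fun s s' => if Good s then ∑ᶠ t', M.p (tf s) t' * δf s t' s' else 0 with hrowdef
  have hrow_mem : ∀ s, Good s → ∀ s', memPI P v s s' (row s s') := by
    intro s hs s'
    simp only [hrowdef, if_pos hs]
    exact (hkey s hs).2.2.2.2.1 s'
  have hrow_nonneg : ∀ s s', 0 ≤ row s s' := by
    intro s s'
    by_cases hs : Good s
    · have := hrow_mem s hs s'
      obtain ⟨h1, h2, _, _⟩ := this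
      linarith
    · simp [hrowdef, if_neg hs]
  have hrow_good : ∀ s s', Good s → 0 < row s s' → Good s' := by
    intro s s' hs hpos
    rw [hrowdef] at hpos
    simp only [if_pos hs] at hpos
    obtain ⟨t', ht'⟩ := finsum_pos_elim
      (fun t' => mul_nonneg (M.nonneg _ _) ((hkey s hs).2.2.1 t' s')) (ne_of_gt hpos)
    have hp : 0 < M.p (tf s) t' := by
      rcases lt_or_eq_of_le (M.nonneg (tf s) t') with h | h
      · exact h
      · rw [← h, zero_mul] at ht'; exact absurd ht' (lt_irrefl 0)
    have hδ : 0 < δf s t' s' := by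
      rcases lt_or_eq_of_le ((hkey s hs).2.2.1 t' s') with h | h
      · exact h
      · rw [← h, mul_zero] at ht'; exact absurd ht' (lt_irrefl 0)
    exact ⟨t', ((hkey s hs).1).tail hp, (hkey s hs).2.2.2.2.2 t' s' hδ⟩
  have hrow_sum : ∀ s, Good s → ∑ᶠ s', row s s' = 1 := by
    intro s hs
    obtain ⟨ht, hts, hδ0, hδ1, _, _⟩ := hkey s hs
    have hsupp : (Function.support (M.p (tf s))).Finite := by
      by_contra hinf
      have := finsum_of_infinite_support hinf
      rw [M.sum_one (tf s)] at this
      exact one_ne_zero this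
    have hterm : ∀ s', row s s' = ∑ t' ∈ hsupp.toFinset, M.p (tf s) t' * δf s t' s' := by
      intro s'
      rw [hrowdef]
      simp only [if_pos hs]
      refine finsum_eq_finset_sum_of_support_subset _ ?_
      intro t' ht'
      rw [Function.mem_support] at ht'
      rw [Set.Finite.coe_toFinset, Function.mem_support]
      intro hz
      exact ht' (by rw [hz, zero_mul])
    calc ∑ᶠ s', row s s' = ∑ s' : S, row s s' := finsum_eq_sum_of_fintype _
      _ = ∑ s' : S, ∑ t' ∈ hsupp.toFinset, M.p (tf s) t' * δf s t' s' := by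
          exact Finset.sum_congr rfl fun s' _ => hterm s'
      _ = ∑ t' ∈ hsupp.toFinset, ∑ s' : S, M.p (tf s) t' * δf s t' s' := Finset.sum_comm
      _ = ∑ t' ∈ hsupp.toFinset, M.p (tf s) t' := by
          refine Finset.sum_congr rfl fun t' ht' => ?_
          rw [Set.Finite.mem_toFinset, Function.mem_support] at ht'
          have hp : 0 < M.p (tf s) t' :=
            lt_of_le_of_ne (M.nonneg _ _) (Ne.symm ht')
          rw [← Finset.mul_sum]
          have : ∑ s' : S, δf s t' s' = 1 := by
            rw [← finsum_eq_sum_of_fintype]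
            exact hδ1 t' hp
          rw [this, mul_one]
      _ = ∑ᶠ t', M.p (tf s) t' := (finsum_eq_sum _ hsupp).symm
      _ = 1 := M.sum_one (tf s)
  -- reachability in the row-graph
  set E : S → S → Prop := fun a b => 0 < row a b with hEdef
  have hRDGood : ∀ s, RD P.s0 E s → Good s :=
    rd_ind hGood0 (fun a b ha hab => hrow_good a b ha hab)
  -- final transition matrix: zero out unreachable rows
  set θ : S → S → ℝ := fun s s' => if RD P.s0 E s then row s s' else 0 with hθdef
  set ω : S → ℕ := fun s => if h : RD P.s0 E s then Nat.find h + 1 else 0 with hωdef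
  have hθrow : ∀ s, RD P.s0 E s → θ s = row s := by
    intro s hs; funext s'; simp [hθdef, if_pos hs]
  have hθzero : ∀ s, ¬ RD P.s0 E s → θ s = fun _ => 0 := by
    intro s hs; funext s'; simp [hθdef, if_neg hs]
  have hωRD : ∀ s, ω s ≠ 0 ↔ RD P.s0 E s := by
    intro s
    constructor
    · intro h
      by_contra hc
      rw [hωdef] at h
      simp only [dif_neg hc] at h
      exact h rfl
    · intro h
      rw [hωdef]
      simp only [dif_pos h]
      omega
  have hθnonneg : ∀ s s', 0 ≤ θ s s' := by
    intro s s'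
    by_cases hs : RD P.s0 E s
    · rw [hθrow s hs]; exact hrow_nonneg s s'
    · rw [hθzero s hs]
  -- θ s' s positive implies RD of s given RD s'
  have hθstep : ∀ s s', θ s s' ≠ 0 → RD P.s0 E s' := by
    intro s s' hne
    have hs : RD P.s0 E s := by
      by_contra hc
      rw [hθzero s hc] at hne
      exact hne rfl
    rw [hθrow s hs] at hne
    exact rd_step hs (lt_of_le_of_ne (hrow_nonneg s s') (Ne.symm hne))
  -- PSucc from positive row within reach
  have hPSucc : ∀ s s', RD P.s0 E s → 0 < row s s' → PSucc P s s' := by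
    intro s s' hs hpos
    obtain ⟨_, _, h3, _⟩ := hrow_mem s (hRDGood s hs) s'
    exact ⟨v, Or.inr (by linarith)⟩
  -- the outgoing sum with PSucc-gating equals plain row-sum
  have hout : ∀ s, (∑ᶠ s', if PSucc P s s' then θ s s' else 0) =
      if RD P.s0 E s then (1:ℝ) else 0 := by
    intro s
    by_cases hs : RD P.s0 E s
    · rw [if_pos hs]
      have hterm : ∀ s', (if PSucc P s s' then θ s s' else 0) = θ s s' := by
        intro s'
        by_cases hps : PSucc P s s'
        · rw [if_pos hps]
        · rw [if_neg hps, hθrow s hs]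
          exact (not_psucc hps v (hrow_mem s (hRDGood s hs) s')).symm
      rw [finsum_congr hterm, hθrow s hs]
      exact hrow_sum s (hRDGood s hs)
    · rw [if_neg hs]
      refine finsum_eq_zero_of_forall_eq_zero fun s' => ?_
      rw [hθzero s hs]
      simp
  refine ⟨v, θ, ω, hv, ?_, ?_, ?_, ?_, ?_, ?_, ?_, ?_, ?_, ?_, ?_⟩
  · -- θ bounds
    intro s s'
    refine ⟨hθnonneg s s', ?_⟩
    by_cases hs : RD P.s0 E s
    · rw [hθrow s hs]
      obtain ⟨_, _, h3, h4⟩ := hrow_mem s (hRDGood s hs) s'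
      linarith
    · rw [hθzero s hs]; norm_num
  · -- ω s0 = 1
    rw [hωdef]
    simp only [dif_pos (rd_s0 (E := E))]
    rw [(find_eq_zero_iff (rd_s0 (E := E))).2 rfl]
  · -- s ≠ s0 → ω s ≠ 1
    intro s hne
    rw [hωdef]
    by_cases hs : RD P.s0 E s
    · simp only [dif_pos hs]
      intro h
      exact hne ((find_eq_zero_iff hs).1 (by omega))
    · simp only [dif_neg hs]
      omega
  · -- ω ≤ card
    intro s
    rw [hωdef]
    by_cases hs : RD P.s0 E s
    · simp only [dif_pos hs]
      exact card_bound hs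
    · simp only [dif_neg hs]
      omega
  · -- predecessor witness
    intro s hne hgt
    have hs : RD P.s0 E s := (hωRD s).1 (by omega)
    have hfindpos : 0 < Nat.find hs :=
      Nat.pos_of_ne_zero fun h => hne ((find_eq_zero_iff hs).1 h)
    obtain ⟨s', h', hfind, hE'⟩ := pred_lemma hs hfindpos
    have hωs : ω s = Nat.find hs + 1 := by rw [hωdef]; simp only [dif_pos hs]
    have hωs' : ω s' = Nat.find h' + 1 := by rw [hωdef]; simp only [dif_pos h']
    refine ⟨s', ?_, hPSucc s' s h' hE', by omega, ?_⟩
    · intro heq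
      subst heq
      have : Nat.find h' = Nat.find hs := rfl
      omega
    · rw [hθrow s' h']
      exact hE'
  · -- incoming qualitative iff
    intro s hne
    constructor
    · intro h0 s' hne' _
      by_cases hω' : ω s' = 0
      · exact Or.inl hω'
      · right
        by_contra hθne
        have : RD P.s0 E s := hθstep s' s hθne
        exact absurd ((hωRD s).2 this) (by omega)
    · intro hall
      by_contra hω
      have hs : RD P.s0 E s := (hωRD s).1 hω
      have hfindpos : 0 < Nat.find hs :=
        Nat.pos_of_ne_zero fun h => hne ((find_eq_zero_iff hs).1 h)
      obtain ⟨s', h', hfind, hE'⟩ := pred_lemma hs hfindpos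
      have hne' : s' ≠ s := by
        intro heq
        subst heq
        have : Nat.find h' = Nat.find hs := rfl
        omega
      rcases hall s' hne' (hPSucc s' s h' hE') with h | h
      · exact absurd ((hωRD s').2 h') (by omega)
      · rw [hθrow s' h'] at h
        exact absurd h (ne_of_gt hE')
  · -- incoming sum iff
    intro s hne
    have hsum : (∑ᶠ s', if PSucc P s' s ∧ s' ≠ s then θ s' s else 0) = 0 ↔
        ∀ s', PSucc P s' s ∧ s' ≠ s → θ s' s = 0 := by
      rw [finsum_eq_sum_of_fintype]
      rw [Finset.sum_eq_zero_iff_of_nonneg (fun s' _ => by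
        by_cases h : PSucc P s' s ∧ s' ≠ s
        · rw [if_pos h]; exact hθnonneg s' s
        · rw [if_neg h])]
      constructor
      · intro h s' hc
        have := h s' (Finset.mem_univ _)
        rwa [if_pos hc] at this
      · intro h s' _
        by_cases hc : PSucc P s' s ∧ s' ≠ s
        · rw [if_pos hc]; exact h s' hc
        · rw [if_neg hc]
    rw [hsum]
    constructor
    · intro h0 s' ⟨hps, hne'⟩
      by_contra hθne
      have : RD P.s0 E s := hθstep s' s hθne
      exact absurd ((hωRD s).2 this) (by omega)
    · intro hall
      by_contra hω
      have hs : RD P.s0 E s := (hωRD s).1 hω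
      have hfindpos : 0 < Nat.find hs :=
        Nat.pos_of_ne_zero fun h => hne ((find_eq_zero_iff hs).1 h)
      obtain ⟨s', h', hfind, hE'⟩ := pred_lemma hs hfindpos
      have hne' : s' ≠ s := by
        intro heq
        subst heq
        have : Nat.find h' = Nat.find hs := rfl
        omega
      have := hall s' ⟨hPSucc s' s h' hE', hne'⟩
      rw [hθrow s' h'] at this
      exact absurd this (ne_of_gt hE')
  · -- outgoing sum = 1 iff
    intro s
    rw [hout s, hωRD s]
    constructor
    · intro h; rw [if_pos h]
    · intro h
      by_contra hc
      rw [if_neg hc] at h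
      exact one_ne_zero h.symm
  · -- outgoing sum = 0 iff
    intro s
    rw [hout s]
    constructor
    · intro h
      have hnr : ¬ RD P.s0 E s := fun hc => (hωRD s).2 hc h
      rw [if_neg hnr]
    · intro h
      by_contra hc
      have : RD P.s0 E s := (hωRD s).1 hc
      rw [if_pos this] at h
      exact one_ne_zero h
  · -- memPI
    intro s hω s' _
    have hs : RD P.s0 E s := (hωRD s).1 hω
    rw [hθrow s hs]
    exact hrow_mem s (hRDGood s hs) s'
  · -- labels
    intro s hVs
    by_contra hω
    have hs : RD P.s0 E s := (hωRD s).1 hω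
    obtain ⟨t, ht, hts⟩ := hRDGood s hs
    exact hno ⟨t, ht, by rw [(hR t s hts).1, hVs]⟩

lemma satop_to_satap {S A Y : Type} (M : MC S A) (P : PIMC S A Y)
    (h : SatOP M P) : SatAP M P := by
  classical
  obtain ⟨hs0, hV, v, hv, hmem⟩ := h
  refine ⟨v, hv, fun t s => t = s ∧ MC.Reaches M.p M.s0 t,
    ⟨hs0, Relation.ReflTransGen.refl⟩, ?_⟩
  rintro t s ⟨rfl, ht⟩
  refine ⟨by rw [hV],
    fun t' s' => if t' = s' ∧ MC.Reaches M.p M.s0 t' then 1 else 0, ?_, ?_, ?_, ?_⟩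
  · intro t' s'
    dsimp only
    by_cases h : t' = s' ∧ MC.Reaches M.p M.s0 t'
    · rw [if_pos h]; norm_num
    · rw [if_neg h]
  · intro t' hp
    have ht' : MC.Reaches M.p M.s0 t' := ht.tail hp
    have : ∀ x, x ≠ t' →
        (if x = t' ∧ MC.Reaches M.p M.s0 x then (1:ℝ) else 0) = 0 := by
      intro x hx
      rw [if_neg]
      rintro ⟨rfl, _⟩
      exact hx rfl
    calc (∑ᶠ s', if t' = s' ∧ MC.Reaches M.p M.s0 t' then (1:ℝ) else 0)
        = ∑ᶠ s', if s' = t' ∧ MC.Reaches M.p M.s0 s' then (1:ℝ) else 0 := by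
          refine finsum_congr fun s' => ?_
          by_cases hc : t' = s'
          · subst hc; rfl
          · rw [if_neg (fun hh => hc hh.1), if_neg (fun hh => hc (hh.1.symm))]
      _ = _ := finsum_eq_single _ t' this
      _ = 1 := by rw [if_pos ⟨rfl, ht'⟩]
  · intro s'
    have hsum : (∑ᶠ t', M.p t t' * if t' = s' ∧ MC.Reaches M.p M.s0 t' then (1:ℝ) else 0)
        = M.p t s' * if s' = s' ∧ MC.Reaches M.p M.s0 s' then (1:ℝ) else 0 := by
      refine finsum_eq_single _ s' fun x hx => ?_
      rw [if_neg (fun hh => hx hh.1), mul_zero]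
    rw [hsum]
    by_cases hr : MC.Reaches M.p M.s0 s'
    · rw [if_pos ⟨rfl, hr⟩, mul_one]
      exact hmem t ht s'
    · rw [if_neg (fun hh => hr hh.2), mul_zero]
      have hp0 : M.p t s' = 0 := by
        by_contra hc
        exact hr (ht.tail (lt_of_le_of_ne (M.nonneg t s') (Ne.symm hc)))
      have := hmem t ht s'
      rwa [hp0] at this
  · rintro t' s' hpos
    dsimp only at hpos
    by_cases h : t' = s' ∧ MC.Reaches M.p M.s0 t'
    · exact h
    · rw [if_neg h] at hpos; exact absurd hpos (lt_irrefl 0)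

end stmt17

/-- if the existential-consistency constraints together with the
reachability-witness constraints (`ω` counters, `ρ_s ⟺ ω_s ≠ 0`) and
`⋀_{s ∈ S_α} ¬ρ_s` are unsatisfiable, then `α` is universally reachable: every Markov
chain satisfying the pIMC `P` (under either semantics) reaches a state labeled `α` with
positive probability. -/
theorem stmt17 {S A Y : Type} [Finite S] (P : PIMC S A Y) (α : Set A)
    (hunsat : ¬ ∃ (v : Y → ℝ) (θ : S → S → ℝ) (ω : S → ℕ),
      (∀ y, 0 ≤ v y ∧ v y ≤ 1) ∧
      (∀ s s', 0 ≤ θ s s' ∧ θ s s' ≤ 1) ∧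
      -- qualitative-reachability counter constraints (ρ_s := ω_s ≠ 0)
      ω P.s0 = 1 ∧
      (∀ s, s ≠ P.s0 → ω s ≠ 1) ∧
      (∀ s, ω s ≤ Nat.card S) ∧
      (∀ s, s ≠ P.s0 → 1 < ω s →
        ∃ s', s' ≠ s ∧ PSucc P s' s ∧ ω s = ω s' + 1 ∧ 0 < θ s' s) ∧
      (∀ s, s ≠ P.s0 →
        (ω s = 0 ↔ ∀ s', s' ≠ s → PSucc P s' s → (ω s' = 0 ∨ θ s' s = 0))) ∧
      -- existential-consistency constraints
      (∀ s, s ≠ P.s0 →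
        (ω s = 0 ↔ (∑ᶠ s', if PSucc P s' s ∧ s' ≠ s then θ s' s else 0) = 0)) ∧
      (∀ s, ω s ≠ 0 ↔ (∑ᶠ s', if PSucc P s s' then θ s s' else 0) = 1) ∧
      (∀ s, ω s = 0 ↔ (∑ᶠ s', if PSucc P s s' then θ s s' else 0) = 0) ∧
      (∀ s, ω s ≠ 0 → ∀ s', PSucc P s s' → memPI P v s s' (θ s s')) ∧
      -- ⋀_{s ∈ S_α} ¬ρ_s
      (∀ s, P.V s = α → ω s = 0)) :
    (∀ M : MC S A, SatOP M P →
      ∃ t, MC.Reaches M.p M.s0 t ∧ M.V t = α) ∧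
    (∀ (T : Type) (M : MC T A), SatAP M P →
      ∃ t, MC.Reaches M.p M.s0 t ∧ M.V t = α) := by
  have main : ∀ (T : Type) (M : MC T A), SatAP M P →
      ∃ t, MC.Reaches M.p M.s0 t ∧ M.V t = α := by
    intro T M hsat
    by_contra hno
    exact hunsat (stmt17.mainA P α M hsat hno)
  exact ⟨fun M h => main S M (stmt17.satop_to_satap M P h), main⟩
end

section
/- For any finite set S with distinguished element s0 and any family of 'transition support' relations, the relation R' constructed in the degree-1 reduction — defined on pairs (u_t^s, s) for (t,s) in the original satisfaction relation R — is itself a satisfaction relation of degree 1 between the split Markov chain M' and the IMC I: each state u_t^s of M' is related to exactly one state of I, namely s, and the correspondence function δ'(u_{t'}^{s'})(s'') = 1 if s'' = s' and 0 otherwise witnesses the required conditions, using Σ_{t'∈T} p(t)(t')·δ_t^s(t')(s') = p'(u_t^s)({u_{t'}^{s'} : t' ∈ T}) ∈ P(s, s'). -/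
open Classical

/-- in the degree-reduction construction, the relation
`R' = {(u_t^s, s)}` is a degree-1 at-every-step satisfaction relation between the split
chain `M'` and `I`, witnessed by the Dirac correspondence functions
`δ'(u_{t'}^{s'})(s'') = 1` iff `s'' = s'`, and
`Σ_{t'} p(t)(t')·δ_t^s(t')(s') = p'(u_t^s)({u_{t'}^{s'} : t'})`. -/
theorem stmt18 {T S A : Type} [Finite T] [Finite S]
    (M : MC T A) (I : IMC S A)
    (R : T → S → Prop) (hR0 : R M.s0 I.s0)
    (δ : T → S → T → S → ℝ)
    (hlab : ∀ t s, R t s → M.V t = I.V s)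
    (hnn : ∀ t s t' s', 0 ≤ δ t s t' s')
    (hdist : ∀ t s, R t s → ∀ t', 0 < M.p t t' → ∑ᶠ s', δ t s t' s' = 1)
    (hint : ∀ t s, R t s → ∀ s',
      (∑ᶠ t', M.p t t' * δ t s t' s') ∈ Set.Icc (I.Plo s s') (I.Phi s s'))
    (hsupp : ∀ t s, R t s → ∀ t' s', 0 < δ t s t' s' → R t' s')
    (M' : MC {x : T × S // R x.1 x.2} A)
    (hs0 : M'.s0 = ⟨(M.s0, I.s0), hR0⟩)
    (hp' : ∀ u v : {x : T × S // R x.1 x.2},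
      M'.p u v = M.p u.1.1 v.1.1 * δ u.1.1 u.1.2 v.1.1 v.1.2)
    (hV' : ∀ u : {x : T × S // R x.1 x.2}, M'.V u = M.V u.1.1) :
    IsSatRel M' I (fun u s' => s' = u.1.2) ∧
    (∀ u : {x : T × S // R x.1 x.2}, {s' | s' = u.1.2}.ncard = 1) ∧
    (∀ (u : {x : T × S // R x.1 x.2}) (s' : S),
      (∑ᶠ t', M.p u.1.1 t' * δ u.1.1 u.1.2 t' s') =
        ∑ᶠ u' : {x : T × S // R x.1 x.2}, if u'.1.2 = s' then M'.p u u' else 0) ∧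
    (∀ u : {x : T × S // R x.1 x.2},
      (∀ u' : {x : T × S // R x.1 x.2}, 0 < M'.p u u' →
        (∑ᶠ s'' : S, (if s'' = u'.1.2 then (1 : ℝ) else 0)) = 1) ∧
      (∀ s'' : S,
        (∑ᶠ u' : {x : T × S // R x.1 x.2},
            M'.p u u' * (if s'' = u'.1.2 then (1 : ℝ) else 0)) ∈
          Set.Icc (I.Plo u.1.2 s'') (I.Phi u.1.2 s'')) ∧
      (∀ (u' : {x : T × S // R x.1 x.2}) (s'' : S),
        (0 : ℝ) < (if s'' = u'.1.2 then (1 : ℝ) else 0) → s'' = u'.1.2)) := by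
    classical
  haveI : Fintype T := Fintype.ofFinite T
  haveI : Fintype S := Fintype.ofFinite S
  haveI : Fintype {x : T × S // R x.1 x.2} := Fintype.ofFinite _
  -- key sum identity
  have key : ∀ (u : {x : T × S // R x.1 x.2}) (s'' : S),
      (∑ᶠ u' : {x : T × S // R x.1 x.2},
        M'.p u u' * (if s'' = u'.1.2 then (1:ℝ) else 0)) =
      ∑ᶠ t', M.p u.1.1 t' * δ u.1.1 u.1.2 t' s'' := by
    intro u s''
    rw [finsum_eq_sum_of_fintype, finsum_eq_sum_of_fintype]
    have step1 : (∑ u' : {x : T × S // R x.1 x.2},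
        M'.p u u' * (if s'' = u'.1.2 then (1:ℝ) else 0)) =
        ∑ x ∈ Finset.univ.filter (fun x : T × S => R x.1 x.2),
          M.p u.1.1 x.1 * δ u.1.1 u.1.2 x.1 x.2 * (if s'' = x.2 then (1:ℝ) else 0) := by
      rw [← Finset.sum_subtype_eq_sum_filter]
      rw [Finset.subtype_univ]
      refine Finset.sum_congr rfl fun v _ => ?_
      rw [hp']
    rw [step1]
    have step2 : (∑ x ∈ Finset.univ.filter (fun x : T × S => R x.1 x.2),
          M.p u.1.1 x.1 * δ u.1.1 u.1.2 x.1 x.2 * (if s'' = x.2 then (1:ℝ) else 0)) =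
        ∑ x : T × S,
          M.p u.1.1 x.1 * δ u.1.1 u.1.2 x.1 x.2 * (if s'' = x.2 then (1:ℝ) else 0) := by
      refine Finset.sum_filter_of_ne fun x _ hx => ?_
      by_contra hR
      apply hx
      have hδ : δ u.1.1 u.1.2 x.1 x.2 = 0 := by
        rcases lt_or_eq_of_le (hnn u.1.1 u.1.2 x.1 x.2) with h | h
        · exact absurd (hsupp u.1.1 u.1.2 u.2 x.1 x.2 h) hR
        · exact h.symm
      rw [hδ, mul_zero, zero_mul]
    rw [step2, Fintype.sum_prod_type]
    refine Finset.sum_congr rfl fun t' _ => ?_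
    simp [mul_ite]
  have keyA : ∀ u : {x : T × S // R x.1 x.2}, ∀ s'' : S,
      (∑ᶠ u' : {x : T × S // R x.1 x.2},
        M'.p u u' * (if s'' = u'.1.2 then (1:ℝ) else 0)) ∈
        Set.Icc (I.Plo u.1.2 s'') (I.Phi u.1.2 s'') := by
    intro u s''
    rw [key]
    exact hint u.1.1 u.1.2 u.2 s''
  have hdir : ∀ u' : {x : T × S // R x.1 x.2},
      (∑ᶠ s'' : S, (if s'' = u'.1.2 then (1:ℝ) else 0)) = 1 := by
    intro u'
    rw [finsum_eq_sum_of_fintype]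
    simp
  refine ⟨⟨?_, ?_⟩, ?_, ?_, ?_⟩
  · rw [hs0]
  · intro v s hv
    refine ⟨?_, fun v' s'' => if s'' = v'.1.2 then (1:ℝ) else 0, ?_, ?_, ?_, ?_⟩
    · rw [hV' v, hv]; exact hlab v.1.1 v.1.2 v.2
    · intro t' s'
      by_cases h : s' = t'.1.2 <;> simp [h]
    · intro v' _; exact hdir v'
    · intro s''
      rw [hv]
      exact keyA v s''
    · intro v' s'' h
      by_contra hne
      simp [hne] at h
  · intro u
    have : {s' | s' = u.1.2} = {u.1.2} := by ext x; simp
    rw [this, Set.ncard_singleton]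
  · intro u s'
    rw [← key u s', finsum_eq_sum_of_fintype, finsum_eq_sum_of_fintype]
    refine Finset.sum_congr rfl fun v _ => ?_
    by_cases h : s' = v.1.2
    · simp [h]
    · simp [h, Ne.symm h]
  · intro u
    exact ⟨fun u' _ => hdir u', keyA u, fun u' s'' h => by
      by_contra hne; simp [hne] at h⟩
end
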